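/- arXiv:0910.5730 — 2 statements merged into one kernel-verified Lean document; each statement's English description precedes it below -/
import Mathlib

section
/- In the limiting dynamical system, conditions (i)–(ii) hold at time s_0 = 0; and whenever conditions (i)–(ii) hold at time s_n, the increment Δ_n is strictly positive and conditions (i)–(ii) hold again at time s_{n+1} = s_n + Δ_n. Consequently the recursion is well defined for every n ≥ 0 and defines y_j(t) for all j ≥ 0 and all t ∈ [0, t*). -/
namespace SelectiveSweeps

noncomputable section

/-- `γ_j = (1+γ)^j − 1` for `j ∈ ℤ`. -/
def gam (γ : ℝ) (j : ℤ) : ℝ := (1 + γ) ^ j - 1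

/-- `λ_j = (1+ρ)(1+γ)^j − 1` for `j ∈ ℤ`. -/
def lam (γ ρ : ℝ) (j : ℤ) : ℝ := (1 + ρ) * (1 + γ) ^ j - 1

/-- A state of the recursion: the time `s_n` together with the values `y_j(s_n)`, `j ∈ ℕ`. -/
structure St where
  s : ℝ
  y : ℕ → ℝ

/-- `α_n = α + ρ s_n / γ`. -/
def alphaOf (γ ρ α : ℝ) (σ : St) : ℝ := α + ρ * σ.s / γ

/-- `m_n = max {j : y_j(s_n) = α_n}`. -/
def mOf (γ ρ α : ℝ) (σ : St) : ℕ := sSup {j : ℕ | σ.y j = alphaOf γ ρ α σ}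

/-- `k_n = max {j : y_j(s_n) > 0}`. -/
def kOf (σ : St) : ℕ := sSup {j : ℕ | 0 < σ.y j}

/-- `k_n^* = k_n` if `y_{k_n}(s_n) < 1`, and `k_n + 1` if `y_{k_n}(s_n) = 1`. -/
def kstarOf (σ : St) : ℕ := if σ.y (kOf σ) < 1 then kOf σ else kOf σ + 1

/-- `δ_{n,j}`:  `(α_n − y_j(s_n))·γ/(λ_{j−m_n} − ρ)` for `m_n < j < k_n^*` and
`(1 − y_{k_n^*}(s_n))·γ/λ_{k_n^*−m_n}` for `j = k_n^*`. -/
def deltaOf (γ ρ α : ℝ) (σ : St) (j : ℕ) : ℝ :=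
  if j = kstarOf σ then
    (1 - σ.y (kstarOf σ)) * γ / lam γ ρ ((kstarOf σ : ℤ) - (mOf γ ρ α σ : ℤ))
  else
    (alphaOf γ ρ α σ - σ.y j) * γ / (lam γ ρ ((j : ℤ) - (mOf γ ρ α σ : ℤ)) - ρ)

/-- `Δ_n = min {δ_{n,j} : m_n < j ≤ k_n^*}`. -/
def DeltaOf (γ ρ α : ℝ) (σ : St) : ℝ :=
  sInf (deltaOf γ ρ α σ '' Set.Ioc (mOf γ ρ α σ) (kstarOf σ))

/-- One step of the recursion: `s_{n+1} = s_n + Δ_n` and, evaluating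
`y_j(s_n + t) = max (y_j(s_n) + t·λ_{j−m_n}/γ) 0` (for `j ≤ k_n^*`; `0` for `j > k_n^*`)
at `t = Δ_n`, the new values `y_j(s_{n+1})`. -/
def step (γ ρ α : ℝ) (σ : St) : St where
  s := σ.s + DeltaOf γ ρ α σ
  y := fun j =>
    if j ≤ kstarOf σ then
      max (σ.y j + DeltaOf γ ρ α σ * lam γ ρ ((j : ℤ) - (mOf γ ρ α σ : ℤ)) / γ) 0
    else 0

/-- The state after `n` steps: `(state γ ρ α n).s = s_n` and `(state γ ρ α n).y j = y_j(s_n)`.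
Initially `s_0 = 0` and `y_j(0) = max (α − j) 0`. -/
def state (γ ρ α : ℝ) (n : ℕ) : St :=
  (step γ ρ α)^[n] ⟨0, fun j => max (α - j) 0⟩

/-- The index `n` of the interval `[s_n, s_{n+1}]` used to evaluate `y_j` at time `t`. -/
def idxAt (γ ρ α : ℝ) (t : ℝ) : ℕ := sInf {n : ℕ | t < (state γ ρ α (n + 1)).s}

/-- `y_j(t)`, evaluated via the piecewise linear recursion: for `s_n ≤ t ≤ s_{n+1}`,
`y_j(t) = max (y_j(s_n) + (t − s_n)·λ_{j−m_n}/γ) 0` for `j ≤ k_n^*`, and `0` for `j > k_n^*`. -/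
def yAt (γ ρ α : ℝ) (j : ℕ) (t : ℝ) : ℝ :=
  let σ := state γ ρ α (idxAt γ ρ α t)
  if j ≤ kstarOf σ then
    max (σ.y j + (t - σ.s) * lam γ ρ ((j : ℤ) - (mOf γ ρ α σ : ℤ)) / γ) 0
  else 0

/-- Conditions (i)–(ii) at a state: (i) the sets defining `m_n` and `k_n` are nonempty and
bounded, `y_j(s_n) ≤ α_n` for all `j`, and `y_j(s_n) > 0` for `m_n ≤ j ≤ k_n`;
(ii) `y_{j+1}(s_n) ≥ y_j(s_n) − 1` for all `0 ≤ j ≤ k_n`. -/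
def Cond (γ ρ α : ℝ) (σ : St) : Prop :=
  {j : ℕ | σ.y j = alphaOf γ ρ α σ}.Nonempty ∧
  BddAbove {j : ℕ | σ.y j = alphaOf γ ρ α σ} ∧
  {j : ℕ | 0 < σ.y j}.Nonempty ∧
  BddAbove {j : ℕ | 0 < σ.y j} ∧
  (∀ j : ℕ, σ.y j ≤ alphaOf γ ρ α σ) ∧
  (∀ j : ℕ, mOf γ ρ α σ ≤ j → j ≤ kOf σ → 0 < σ.y j) ∧
  (∀ j : ℕ, j ≤ kOf σ → σ.y j - 1 ≤ σ.y (j + 1))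

/-- `t_j = inf { t ∈ [0, t*) : y_j(t) = 1 }`, where `t < t* = Σ_n Δ_n = sup_n s_n` is
expressed as `∃ n, t < s_n`. -/
def tHit (γ ρ α : ℝ) (j : ℕ) : ℝ :=
  sInf {t : ℝ | 0 ≤ t ∧ (∃ n : ℕ, t < (state γ ρ α n).s) ∧ yAt γ ρ α j t = 1}



/-! ### Auxiliary lemmas -/

lemma lam_zero (γ ρ : ℝ) : lam γ ρ 0 = ρ := by simp [lam]

lemma lam_mono {γ ρ : ℝ} (hγ : 0 < γ) (hρ : 0 ≤ ρ) {i j : ℤ} (h : i ≤ j) :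
    lam γ ρ i ≤ lam γ ρ j := by
  have h1 : (1:ℝ) ≤ 1 + γ := by linarith
  have h2 : (1+γ:ℝ)^i ≤ (1+γ)^j := zpow_le_zpow_right₀ h1 h
  unfold lam
  nlinarith

lemma lam_gt {γ ρ : ℝ} (hγ : 0 < γ) (hρ : 0 ≤ ρ) {j : ℤ} (h : 0 < j) :
    ρ < lam γ ρ j := by
  have h1 : (1:ℝ) < 1 + γ := by linarith
  have h2 : (1:ℝ) < (1+γ)^j := one_lt_zpow₀ h1 (by omega)
  unfold lam
  nlinarith

/-- The inductive invariant: conditions (i)–(ii) plus nonnegativity of the time and values. -/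
def Inv (γ ρ α : ℝ) (σ : St) : Prop := Cond γ ρ α σ ∧ 0 ≤ σ.s ∧ ∀ j, 0 ≤ σ.y j

lemma Inv_zero (γ ρ α : ℝ) (hγ : 0 < γ) (hρ : 0 ≤ ρ) (hα : 1 < α) :
    Inv γ ρ α (state γ ρ α 0) := by
  set σ₀ : St := ⟨0, fun j => max (α - j) 0⟩ with hσ₀
  have hst : state γ ρ α 0 = σ₀ := by rw [state, Function.iterate_zero, id, hσ₀]
  rw [hst]
  have hα0 : (0:ℝ) < α := by linarith
  have hyval : ∀ j : ℕ, σ₀.y j = max (α - (j:ℝ)) 0 := fun j => rfl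
  have haOf : alphaOf γ ρ α σ₀ = α := by simp [alphaOf, hσ₀]
  have hA : ∀ j : ℕ, σ₀.y j = alphaOf γ ρ α σ₀ ↔ max (α - (j:ℝ)) 0 = α := by
    intro j; rw [hyval, haOf]
  have hP : ∀ j : ℕ, 0 < σ₀.y j ↔ (j:ℝ) < α := by
    intro j; rw [hyval]
    constructor
    · intro h
      rcases lt_max_iff.mp h with h | h
      · linarith
      · exact absurd h (lt_irrefl 0)
    · intro h; exact lt_max_iff.mpr (Or.inl (by linarith))
  have h0A : σ₀.y 0 = alphaOf γ ρ α σ₀ := by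
    rw [hA, Nat.cast_zero, sub_zero]; exact max_eq_left hα0.le
  have h0P : 0 < σ₀.y 0 := (hP 0).mpr (by simpa using hα0)
  have hPbdd : (Nat.ceil α) ∈ upperBounds {j : ℕ | 0 < σ₀.y j} :=
    fun j hj => (Nat.lt_ceil.mpr ((hP j).mp hj)).le
  refine ⟨⟨⟨0, h0A⟩, ⟨0, ?_⟩, ⟨0, h0P⟩, ⟨Nat.ceil α, hPbdd⟩, ?_, ?_, ?_⟩,
    le_refl 0, fun j => le_max_right _ _⟩
  · intro j hj
    have hj' : max (α - (j:ℝ)) 0 = α := (hA j).mp hj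
    by_contra h
    push_neg at h
    have h1 : (1:ℝ) ≤ (j:ℝ) := by exact_mod_cast h
    have : max (α - (j:ℝ)) 0 < α := max_lt (by linarith) hα0
    rw [hj'] at this; exact lt_irrefl _ this
  · intro j
    rw [hyval, haOf]
    have hj0 : (0:ℝ) ≤ (j:ℝ) := Nat.cast_nonneg j
    exact max_le (by linarith) hα0.le
  · intro j _ hjk
    have hk : 0 < σ₀.y (kOf σ₀) := Nat.sSup_mem ⟨0, h0P⟩ ⟨Nat.ceil α, hPbdd⟩
    have hkα : ((kOf σ₀ : ℕ):ℝ) < α := (hP _).mp hk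
    have hjk' : (j:ℝ) ≤ ((kOf σ₀ : ℕ):ℝ) := by exact_mod_cast hjk
    exact (hP j).mpr (by linarith)
  · intro j _
    rw [hyval, hyval]
    have e1 : α - ((j:ℝ)+1) ≤ max (α - ((j+1:ℕ):ℝ)) 0 := by
      push_cast; exact le_max_left _ _
    have e2 : (0:ℝ) ≤ max (α - ((j+1:ℕ):ℝ)) 0 := le_max_right _ _
    have h3 : max (α - (j:ℝ)) 0 ≤ max (α - ((j+1:ℕ):ℝ)) 0 + 1 :=
      max_le (by linarith) (by linarith)
    linarith

lemma step_pos_inv (γ ρ α : ℝ) (hγ : 0 < γ) (hρ : 0 ≤ ρ) (hα : 1 < α) (σ : St)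
    (H : Inv γ ρ α σ) : 0 < DeltaOf γ ρ α σ ∧ Inv γ ρ α (step γ ρ α σ) := by
  obtain ⟨⟨hAne, hAbdd, hPne, hPbdd, hya, hpos, hii⟩, hs, hy0⟩ := H
  set a := alphaOf γ ρ α σ with ha_def
  set m := mOf γ ρ α σ with hm_def
  set k := kOf σ with hk_def
  set K := kstarOf σ with hK_def
  set Δ := DeltaOf γ ρ α σ with hΔ_def
  have haα : α ≤ a := by
    have : 0 ≤ ρ * σ.s / γ := div_nonneg (mul_nonneg hρ hs) hγ.le
    rw [ha_def]; unfold alphaOf; linarith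
  have ha1 : 1 < a := lt_of_lt_of_le hα haα
  have hym : σ.y m = a := Nat.sSup_mem hAne hAbdd
  have hyk : 0 < σ.y k := Nat.sSup_mem hPne hPbdd
  have hzero : ∀ j, k < j → σ.y j = 0 := by
    intro j hj
    have h1 : ¬ 0 < σ.y j := fun h => absurd (le_csSup hPbdd h) (not_le.mpr hj)
    have := hy0 j
    linarith [not_lt.mp h1]
  have hyk1 : σ.y k ≤ 1 := by
    have h1 := hii k le_rfl
    have h2 := hzero (k+1) (Nat.lt_succ_self k)
    linarith
  have hmk : m ≤ k := le_csSup hPbdd (show 0 < σ.y m by rw [hym]; linarith)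
  have hmk' : m < k := by
    rcases lt_or_eq_of_le hmk with h | h
    · exact h
    · exfalso; rw [h] at hym; rw [hym] at hyk1; linarith
  have hKcase : K = k ∨ K = k + 1 := by
    rw [hK_def, kstarOf, ← hk_def]
    split_ifs
    · exact Or.inl rfl
    · exact Or.inr rfl
  have hkK : k ≤ K := by rcases hKcase with h | h <;> omega
  have hyK : σ.y K < 1 := by
    rw [hK_def, kstarOf, ← hk_def]
    split_ifs with h
    · exact h
    · rw [hzero (k+1) (Nat.lt_succ_self k)]; linarith
  have hmK : m < K := lt_of_lt_of_le hmk' hkK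
  have hyltj : ∀ j, m < j → σ.y j < a :=
    fun j hj => lt_of_le_of_ne (hya j) (fun h => absurd (le_csSup hAbdd h) (not_le.mpr hj))
  -- positivity of the δ's
  have hδ : ∀ j ∈ Set.Ioc m K, 0 < deltaOf γ ρ α σ j := by
    intro j hj
    obtain ⟨hj1, hj2⟩ := hj
    rw [deltaOf, ← hK_def, ← hm_def, ← ha_def]
    split_ifs with hjK
    · have hl : ρ < lam γ ρ ((K:ℤ) - (m:ℤ)) := lam_gt hγ hρ (by omega)
      exact div_pos (mul_pos (by linarith) hγ) (by linarith)
    · have hl : ρ < lam γ ρ ((j:ℤ) - (m:ℤ)) := lam_gt hγ hρ (by omega)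
      exact div_pos (mul_pos (sub_pos.mpr (hyltj j hj1)) hγ) (by linarith)
  have hfin : (deltaOf γ ρ α σ '' Set.Ioc m K).Finite := (Set.finite_Ioc m K).image _
  have hne : (deltaOf γ ρ α σ '' Set.Ioc m K).Nonempty :=
    (Set.nonempty_Ioc.mpr hmK).image _
  have hΔmem : Δ ∈ deltaOf γ ρ α σ '' Set.Ioc m K := by
    rw [hΔ_def, DeltaOf, ← hK_def, ← hm_def]
    exact hne.csInf_mem hfin
  have hΔpos : 0 < Δ := by
    obtain ⟨j, hj, hje⟩ := hΔmem
    rw [← hje]; exact hδ j hj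
  have hΔle : ∀ j ∈ Set.Ioc m K, Δ ≤ deltaOf γ ρ α σ j := by
    intro j hj
    rw [hΔ_def, DeltaOf, ← hK_def, ← hm_def]
    exact csInf_le hfin.bddBelow ⟨j, hj, rfl⟩
  -- the new state
  have hyb : ∀ j, j ≤ K → (step γ ρ α σ).y j
      = max (σ.y j + Δ * lam γ ρ ((j:ℤ) - (m:ℤ)) / γ) 0 := by
    intro j hj
    show (if j ≤ kstarOf σ then _ else 0) = _
    rw [if_pos (hK_def ▸ hj)]
  have hyb' : ∀ j, K < j → (step γ ρ α σ).y j = 0 := by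
    intro j hj
    show (if j ≤ kstarOf σ then _ else 0) = 0
    rw [if_neg (by rw [← hK_def]; omega)]
  have hss : (step γ ρ α σ).s = σ.s + Δ := rfl
  have ha' : alphaOf γ ρ α (step γ ρ α σ) = a + Δ * ρ / γ := by
    rw [ha_def]; unfold alphaOf; rw [hss]; ring
  have hρΔ : 0 ≤ Δ * ρ / γ := div_nonneg (mul_nonneg hΔpos.le hρ) hγ.le
  have ha'1 : 1 < a + Δ * ρ / γ := by linarith
  -- key bound at K
  have hKle1 : σ.y K + Δ * lam γ ρ ((K:ℤ) - (m:ℤ)) / γ ≤ 1 := by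
    have hl : 0 < lam γ ρ ((K:ℤ) - (m:ℤ)) := by
      linarith [lam_gt hγ hρ (show (0:ℤ) < (K:ℤ) - (m:ℤ) by omega)]
    have h1 := hΔle K ⟨hmK, le_rfl⟩
    rw [deltaOf, if_pos hK_def.symm, ← hK_def, ← hm_def, le_div_iff₀ hl] at h1
    have h2 : Δ * lam γ ρ ((K:ℤ) - (m:ℤ)) / γ ≤ 1 - σ.y K := by
      rw [div_le_iff₀ hγ]; linarith
    linarith
  -- general bound
  have hbound : ∀ j, j ≤ K →
      σ.y j + Δ * lam γ ρ ((j:ℤ) - (m:ℤ)) / γ ≤ a + Δ * ρ / γ := by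
    intro j hjK
    rcases eq_or_lt_of_le hjK with he | hlt
    · subst he
      linarith [hKle1]
    · rcases le_or_gt j m with hjm | hjm
      · have hl : lam γ ρ ((j:ℤ) - (m:ℤ)) ≤ ρ := by
          have := lam_mono hγ hρ (show (j:ℤ) - (m:ℤ) ≤ 0 by omega)
          rwa [lam_zero] at this
        have h2 : Δ * lam γ ρ ((j:ℤ) - (m:ℤ)) / γ ≤ Δ * ρ / γ := by gcongr
        linarith [hya j]
      · have h1 := hΔle j ⟨hjm, hjK⟩
        have hl : 0 < lam γ ρ ((j:ℤ) - (m:ℤ)) - ρ :=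
          sub_pos.mpr (lam_gt hγ hρ (by omega))
        rw [deltaOf, if_neg (by rw [← hK_def]; omega), ← hm_def, ← ha_def,
          le_div_iff₀ hl] at h1
        have h2 : Δ * (lam γ ρ ((j:ℤ) - (m:ℤ)) - ρ) / γ ≤ a - σ.y j := by
          rw [div_le_iff₀ hγ]; exact h1
        have e : Δ * lam γ ρ ((j:ℤ) - (m:ℤ)) / γ
            = Δ * ρ / γ + Δ * (lam γ ρ ((j:ℤ) - (m:ℤ)) - ρ) / γ := by ring
        linarith [e ▸ le_refl (Δ * lam γ ρ ((j:ℤ) - (m:ℤ)) / γ), h2, e.le, e.ge]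
  -- value at m
  have hy'm : (step γ ρ α σ).y m = a + Δ * ρ / γ := by
    rw [hyb m hmK.le, hym, sub_self, lam_zero]
    exact max_eq_left (by linarith)
  -- positivity on [m, K]
  have hG7 : ∀ j, m ≤ j → j ≤ K → 0 < (step γ ρ α σ).y j := by
    intro j hmj hjK
    rw [hyb j hjK]
    rcases le_or_gt j k with h | h
    · have h1 : 0 < σ.y j := hpos j hmj h
      have h2 : ρ ≤ lam γ ρ ((j:ℤ) - (m:ℤ)) := by
        have := lam_mono hγ hρ (show (0:ℤ) ≤ (j:ℤ) - (m:ℤ) by omega)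
        rwa [lam_zero] at this
      have h3 : 0 ≤ Δ * lam γ ρ ((j:ℤ) - (m:ℤ)) / γ :=
        div_nonneg (mul_nonneg hΔpos.le (by linarith)) hγ.le
      exact lt_max_iff.mpr (Or.inl (by linarith))
    · have hyj : σ.y j = 0 := hzero j h
      have hl : ρ < lam γ ρ ((j:ℤ) - (m:ℤ)) := lam_gt hγ hρ (by omega)
      have h3 : 0 < Δ * lam γ ρ ((j:ℤ) - (m:ℤ)) / γ :=
        div_pos (mul_pos hΔpos (by linarith)) hγ
      exact lt_max_iff.mpr (Or.inl (by linarith))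
  have hy'0 : ∀ j, 0 ≤ (step γ ρ α σ).y j := by
    intro j
    rcases le_or_gt j K with h | h
    · rw [hyb j h]; exact le_max_right _ _
    · rw [hyb' j h]
  -- Cond components for the new state
  have c1 : ((step γ ρ α σ).y m = alphaOf γ ρ α (step γ ρ α σ)) := by rw [ha']; exact hy'm
  have c2 : BddAbove {j : ℕ | (step γ ρ α σ).y j = alphaOf γ ρ α (step γ ρ α σ)} := by
    refine ⟨K, fun j hj => ?_⟩
    simp only [Set.mem_setOf_eq, ha'] at hj
    by_contra h
    push_neg at h
    rw [hyb' j h] at hj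
    linarith
  have c4 : BddAbove {j : ℕ | 0 < (step γ ρ α σ).y j} := by
    refine ⟨K, fun j hj => ?_⟩
    simp only [Set.mem_setOf_eq] at hj
    by_contra h
    push_neg at h
    rw [hyb' j h] at hj
    exact lt_irrefl 0 hj
  have c5 : ∀ j, (step γ ρ α σ).y j ≤ alphaOf γ ρ α (step γ ρ α σ) := by
    intro j
    rw [ha']
    rcases le_or_gt j K with h | h
    · rw [hyb j h]
      exact max_le (hbound j h) (by linarith)
    · rw [hyb' j h]; linarith
  have hm'ge : m ≤ mOf γ ρ α (step γ ρ α σ) := le_csSup c2 c1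
  have hk'le : kOf (step γ ρ α σ) ≤ K :=
    csSup_le ⟨m, show 0 < (step γ ρ α σ).y m by rw [hy'm]; linarith⟩
      (fun j hj => by
        by_contra h
        push_neg at h
        have := hyb' j h
        simp only [Set.mem_setOf_eq, this] at hj
        exact lt_irrefl 0 hj)
  have c6 : ∀ j, mOf γ ρ α (step γ ρ α σ) ≤ j → j ≤ kOf (step γ ρ α σ) →
      0 < (step γ ρ α σ).y j :=
    fun j h1 h2 => hG7 j (le_trans hm'ge h1) (le_trans h2 hk'le)
  have c7 : ∀ j, j ≤ kOf (step γ ρ α σ) →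
      (step γ ρ α σ).y j - 1 ≤ (step γ ρ α σ).y (j + 1) := by
    intro j hj
    have hjK : j ≤ K := hj.trans hk'le
    rcases eq_or_lt_of_le hjK with he | hlt
    · have h1 : (step γ ρ α σ).y (j+1) = 0 := hyb' (j+1) (by omega)
      have h2 : (step γ ρ α σ).y j ≤ 1 := by
        rw [hyb j hjK, he]
        exact max_le hKle1 zero_le_one
      rw [h1]; linarith
    · have hjk : j ≤ k := by rcases hKcase with h | h <;> omega
      have h1 : σ.y j - 1 ≤ σ.y (j+1) := hii j hjk
      have h2 : lam γ ρ ((j:ℤ) - (m:ℤ)) ≤ lam γ ρ (((j+1:ℕ):ℤ) - (m:ℤ)) :=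
        lam_mono hγ hρ (by push_cast; omega)
      have h3 : Δ * lam γ ρ ((j:ℤ) - (m:ℤ)) / γ
          ≤ Δ * lam γ ρ (((j+1:ℕ):ℤ) - (m:ℤ)) / γ := by gcongr
      have h4 : σ.y (j+1) + Δ * lam γ ρ (((j+1:ℕ):ℤ) - (m:ℤ)) / γ
          ≤ (step γ ρ α σ).y (j+1) := by
        rw [hyb (j+1) hlt]; exact le_max_left _ _
      have h5 : 0 ≤ (step γ ρ α σ).y (j+1) := hy'0 (j+1)
      rw [hyb j hjK]
      have h6 : max (σ.y j + Δ * lam γ ρ ((j:ℤ) - (m:ℤ)) / γ) 0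
          ≤ (step γ ρ α σ).y (j+1) + 1 := max_le (by linarith) (by linarith)
      linarith
  exact ⟨hΔpos,
    ⟨⟨m, c1⟩, c2, ⟨m, show 0 < (step γ ρ α σ).y m by rw [hy'm]; linarith⟩, c4, c5, c6, c7⟩,
    by rw [hss]; linarith, hy'0⟩

lemma Inv_state (γ ρ α : ℝ) (hγ : 0 < γ) (hρ : 0 ≤ ρ) (hα : 1 < α) :
    ∀ n, Inv γ ρ α (state γ ρ α n) := by
  intro n
  induction n with
  | zero => exact Inv_zero γ ρ α hγ hρ hα
  | succ n ih =>
    have he : state γ ρ α (n+1) = step γ ρ α (state γ ρ α n) := by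
      rw [state, state, Function.iterate_succ_apply']
    rw [he]
    exact (step_pos_inv γ ρ α hγ hρ hα _ ih).2

/-- Conditions (i)–(ii) hold at time `s_0 = 0`; whenever they hold at `s_n`,
the increment `Δ_n` is strictly positive and they hold again at `s_{n+1} = s_n + Δ_n`.
Consequently the recursion is well defined for every `n ≥ 0`, and the piecewise definition
covers every time `t ∈ [0, t*)` (every such `t` lies in some interval `[s_n, s_{n+1}]`). -/
theorem conditions_propagate (γ ρ α : ℝ) (hγ : 0 < γ) (hρ : 0 ≤ ρ) (hα : 1 < α) :
    Cond γ ρ α (state γ ρ α 0) ∧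
    (∀ n : ℕ, Cond γ ρ α (state γ ρ α n) →
      0 < DeltaOf γ ρ α (state γ ρ α n) ∧ Cond γ ρ α (state γ ρ α (n + 1))) ∧
    (∀ n : ℕ, Cond γ ρ α (state γ ρ α n)) ∧
    (∀ t : ℝ, 0 ≤ t → (∃ n : ℕ, t < (state γ ρ α n).s) →
      ∃ n : ℕ, (state γ ρ α n).s ≤ t ∧ t ≤ (state γ ρ α (n + 1)).s) := by
  have hInv := Inv_state γ ρ α hγ hρ hα
  have hstep : ∀ n, 0 < DeltaOf γ ρ α (state γ ρ α n) ∧ Cond γ ρ α (state γ ρ α (n+1)) :=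
    fun n => ⟨(step_pos_inv γ ρ α hγ hρ hα _ (hInv n)).1, (hInv (n+1)).1⟩
  have hs0 : (state γ ρ α 0).s = 0 := by
    rw [state, Function.iterate_zero, id]
  have hslt : ∀ n, (state γ ρ α n).s < (state γ ρ α (n+1)).s := by
    intro n
    have he : state γ ρ α (n+1) = step γ ρ α (state γ ρ α n) := by
      rw [state, state, Function.iterate_succ_apply']
    rw [he]
    show (state γ ρ α n).s < (state γ ρ α n).s + DeltaOf γ ρ α (state γ ρ α n)
    linarith [(hstep n).1]
  refine ⟨(hInv 0).1, fun n _ => hstep n, fun n => (hInv n).1, ?_⟩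
  intro t ht hex
  have hex' : ∃ n, t < (state γ ρ α (n+1)).s := by
    obtain ⟨N, hN⟩ := hex
    match N with
    | 0 => rw [hs0] at hN; linarith
    | n+1 => exact ⟨n, hN⟩
  classical
  refine ⟨Nat.find hex', ?_, (Nat.find_spec hex').le⟩
  by_cases h0 : Nat.find hex' = 0
  · rw [h0, hs0]; exact ht
  · have hp : Nat.find hex' - 1 < Nat.find hex' := by omega
    have hmin := Nat.find_min hex' hp
    have he : Nat.find hex' - 1 + 1 = Nat.find hex' := by omega
    rw [he] at hmin
    exact not_lt.mp hmin

end

end SelectiveSweeps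
end

section
/- (Regime 1 increments.) Suppose ρ = 0 and 1 < α < 1 + γ/γ_2. Then in the limiting dynamical system the hitting times t_j satisfy: t_1 = 2 − α, and for every j ≥ 1, t_{j+1} − t_j = (2+γ) − (1+γ)·α. In particular the waves of selective sweeps occur at constant increments (2+γ) − (1+γ)α in the rescaled time. -/
namespace SelectiveSweeps

noncomputable section

/-! ### Auxiliary development -/

lemma lam_zero_rho (γ : ℝ) (z : ℤ) : lam γ 0 z = (1+γ)^z - 1 := by simp [lam]

lemma lam_zero_zero (γ : ℝ) : lam γ 0 0 = 0 := by simp [lam]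

lemma lam_zero_one (γ : ℝ) : lam γ 0 1 = γ := by simp [lam]

lemma lam_zero_two (γ : ℝ) : lam γ 0 2 = γ * (2+γ) := by
  rw [lam_zero_rho, zpow_two]; ring

lemma lam_nonpos {γ : ℝ} (hγ : 0 < γ) {z : ℤ} (hz : z ≤ 0) : lam γ 0 z ≤ 0 := by
  rw [lam_zero_rho]
  have := zpow_le_one_of_nonpos₀ (by linarith : (1:ℝ) ≤ 1 + γ) hz
  linarith

lemma lam_neg {γ : ℝ} (hγ : 0 < γ) {z : ℤ} (hz : z < 0) : lam γ 0 z < 0 := by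
  rw [lam_zero_rho]
  have := zpow_lt_one_of_neg₀ (by linarith : (1:ℝ) < 1 + γ) hz
  linarith

lemma alphaOf_zero (γ α : ℝ) (σ : St) : alphaOf γ 0 α σ = α := by simp [alphaOf]

lemma state_zero (γ ρ α : ℝ) : state γ ρ α 0 = ⟨0, fun j => max (α - j) 0⟩ := rfl

lemma state_succ (γ ρ α : ℝ) (n : ℕ) :
    state γ ρ α (n+1) = step γ ρ α (state γ ρ α n) :=
  Function.iterate_succ_apply' _ _ _

/-- Shape of the state `s_{2i+1}`. -/
def isA (γ α : ℝ) (i : ℕ) (σ : St) : Prop :=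
  σ.s = (2 - α) + i * (2 + γ - (1+γ)*α) ∧
  σ.y i = α ∧ σ.y (i+1) = 1 ∧
  (∀ l, l < i → 0 ≤ σ.y l ∧ σ.y l < α) ∧
  (∀ l, i + 1 < l → σ.y l = 0)

/-- Shape of the state `s_{2i+2}`. -/
def isB (γ α : ℝ) (i : ℕ) (σ : St) : Prop :=
  σ.s = (2 - α) + i * (2 + γ - (1+γ)*α) + (α - 1) ∧
  σ.y i = α ∧ σ.y (i+1) = α ∧ σ.y (i+2) = (α-1)*(2+γ) ∧
  (∀ l, l < i → 0 ≤ σ.y l ∧ σ.y l < α) ∧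
  (∀ l, i + 2 < l → σ.y l = 0)

section Main

variable {γ α : ℝ} (hγ : 0 < γ) (hα1 : 1 < α) (hα2 : (α-1)*(2+γ) < 1)
include hγ hα1 hα2

lemma alpha_lt_two : α < 2 := by nlinarith

section A
variable {i : ℕ} {σ : St} (hA : isA γ α i σ)
include hA

lemma mOf_A : mOf γ 0 α σ = i := by
  obtain ⟨hs, hyi, hyi1, hlo, hhi⟩ := hA
  apply IsGreatest.csSup_eq
  constructor
  · simpa [Set.mem_setOf_eq, alphaOf_zero] using hyi
  · intro l hl
    simp only [Set.mem_setOf_eq, alphaOf_zero] at hl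
    by_contra hli
    push_neg at hli
    rcases (by omega : l = i + 1 ∨ i + 1 < l) with h | h
    · rw [h, hyi1] at hl; linarith
    · rw [hhi l h] at hl; linarith

lemma kOf_A : kOf σ = i + 1 := by
  obtain ⟨hs, hyi, hyi1, hlo, hhi⟩ := hA
  apply IsGreatest.csSup_eq
  constructor
  · simp only [Set.mem_setOf_eq, hyi1]; linarith
  · intro l hl
    simp only [Set.mem_setOf_eq] at hl
    by_contra hli
    push_neg at hli
    rw [hhi l hli] at hl; exact lt_irrefl _ hl

lemma kstar_A : kstarOf σ = i + 2 := by
  rw [kstarOf, kOf_A hγ hα1 hα2 hA, hA.2.2.1, if_neg (lt_irrefl 1)]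

lemma Delta_A : DeltaOf γ 0 α σ = α - 1 := by
  have hm := mOf_A hγ hα1 hα2 hA
  have hk := kstar_A hγ hα1 hα2 hA
  have h2γ : (0:ℝ) < 2 + γ := by linarith
  have hIoc : Set.Ioc (mOf γ 0 α σ) (kstarOf σ) = {i+1, i+2} := by
    rw [hm, hk]; ext l; simp only [Set.mem_Ioc, Set.mem_insert_iff, Set.mem_singleton_iff]; omega
  have hd1 : deltaOf γ 0 α σ (i+1) = α - 1 := by
    rw [deltaOf, if_neg (by omega : ¬ i+1 = kstarOf σ), hm, alphaOf_zero,
      (by push_cast; ring : ((i+1 : ℕ) : ℤ) - (i : ℤ) = 1), hA.2.2.1, lam_zero_one]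
    rw [sub_zero, mul_div_assoc, div_self hγ.ne', mul_one]
  have hd2 : deltaOf γ 0 α σ (i+2) = 1 / (2+γ) := by
    rw [deltaOf, if_pos hk.symm, hk, hm,
      (by push_cast; ring : ((i+2 : ℕ) : ℤ) - (i : ℤ) = 2), lam_zero_two,
      hA.2.2.2.2 (i+2) (by omega)]
    rw [sub_zero, one_mul]
    field_simp
  rw [DeltaOf, hIoc]
  rw [Set.image_insert_eq, Set.image_singleton, csInf_pair, hd1, hd2]
  have : α - 1 ≤ 1 / (2+γ) := le_of_lt ((lt_div_iff₀ h2γ).2 hα2)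
  exact inf_eq_left.2 this

end A

end Main
section Main2
variable {γ α : ℝ} (hγ : 0 < γ) (hα1 : 1 < α) (hα2 : (α-1)*(2+γ) < 1)
include hγ hα1 hα2

lemma step_A {i : ℕ} {σ : St} (hA : isA γ α i σ) : isB γ α i (step γ 0 α σ) := by
  have hm := mOf_A hγ hα1 hα2 hA
  have hk := kstar_A hγ hα1 hα2 hA
  have hD := Delta_A hγ hα1 hα2 hA
  have hy : ∀ l : ℕ, (step γ 0 α σ).y l =
      if l ≤ i + 2 then max (σ.y l + (α-1) * lam γ 0 ((l:ℤ) - (i:ℤ)) / γ) 0 else 0 := by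
    intro l
    simp only [step, hm, hk, hD]
  obtain ⟨hs, hyi, hyi1, hlo, hhi⟩ := hA
  refine ⟨?_, ?_, ?_, ?_, ?_, ?_⟩
  · show σ.s + DeltaOf γ 0 α σ = _
    rw [hs, hD]
  · rw [hy i, if_pos (by omega), sub_self, lam_zero_zero, hyi]
    rw [mul_zero, zero_div, add_zero]
    exact max_eq_left (by linarith)
  · rw [hy (i+1), if_pos (by omega),
      (by push_cast; ring : ((i+1 : ℕ) : ℤ) - (i : ℤ) = 1), lam_zero_one, hyi1,
      mul_div_assoc, div_self hγ.ne', mul_one,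
      show (1:ℝ) + (α - 1) = α by ring]
    exact max_eq_left (by linarith)
  · rw [hy (i+2), if_pos (by omega),
      (by push_cast; ring : ((i+2 : ℕ) : ℤ) - (i : ℤ) = 2), lam_zero_two,
      hhi (i+2) (by omega), zero_add]
    rw [show (α-1) * (γ * (2+γ)) / γ = (α-1)*(2+γ) * (γ/γ) by ring, div_self hγ.ne', mul_one]
    exact max_eq_left (by nlinarith)
  · intro l hl
    obtain ⟨h0, h1⟩ := hlo l hl
    rw [hy l, if_pos (by omega)]
    have hcast : (l:ℤ) ≤ (i:ℤ) := by exact_mod_cast hl.le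
    have hlam : lam γ 0 ((l:ℤ) - (i:ℤ)) ≤ 0 := lam_nonpos hγ (by omega)
    have hterm : (α-1) * lam γ 0 ((l:ℤ) - (i:ℤ)) / γ ≤ 0 :=
      div_nonpos_of_nonpos_of_nonneg (mul_nonpos_of_nonneg_of_nonpos (by linarith) hlam) hγ.le
    exact ⟨le_max_right _ _, max_lt (by linarith) (by linarith)⟩
  · intro l hl
    rw [hy l, if_neg (by omega)]

end Main2

section B
variable {γ α : ℝ} (hγ : 0 < γ) (hα1 : 1 < α) (hα2 : (α-1)*(2+γ) < 1)
  {i : ℕ} {σ : St} (hB : isB γ α i σ)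
include hγ hα1 hα2 hB

lemma mOf_B : mOf γ 0 α σ = i + 1 := by
  obtain ⟨hs, hyi, hyi1, hyi2, hlo, hhi⟩ := hB
  apply IsGreatest.csSup_eq
  constructor
  · simpa [Set.mem_setOf_eq, alphaOf_zero] using hyi1
  · intro l hl
    simp only [Set.mem_setOf_eq, alphaOf_zero] at hl
    by_contra hli
    push_neg at hli
    rcases (by omega : l = i + 2 ∨ i + 2 < l) with h | h
    · rw [h, hyi2] at hl; nlinarith
    · rw [hhi l h] at hl; linarith

lemma kOf_B : kOf σ = i + 2 := by
  obtain ⟨hs, hyi, hyi1, hyi2, hlo, hhi⟩ := hB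
  apply IsGreatest.csSup_eq
  constructor
  · simp only [Set.mem_setOf_eq, hyi2]; nlinarith
  · intro l hl
    simp only [Set.mem_setOf_eq] at hl
    by_contra hli
    push_neg at hli
    rw [hhi l hli] at hl; exact lt_irrefl _ hl

lemma kstar_B : kstarOf σ = i + 2 := by
  rw [kstarOf, kOf_B hγ hα1 hα2 hB, hB.2.2.2.1, if_pos (by nlinarith)]

lemma Delta_B : DeltaOf γ 0 α σ = 1 - (α-1)*(2+γ) := by
  have hm := mOf_B hγ hα1 hα2 hB
  have hk := kstar_B hγ hα1 hα2 hB
  have hIoc : Set.Ioc (mOf γ 0 α σ) (kstarOf σ) = {i+2} := by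
    rw [hm, hk]; ext l; simp only [Set.mem_Ioc, Set.mem_singleton_iff]; omega
  rw [DeltaOf, hIoc, Set.image_singleton, csInf_singleton]
  rw [deltaOf, if_pos hk.symm, hk, hm,
    (by push_cast; ring : ((i+2 : ℕ) : ℤ) - ((i+1 : ℕ) : ℤ) = 1), lam_zero_one,
    hB.2.2.2.1, mul_div_assoc, div_self hγ.ne', mul_one]

lemma step_B : isA γ α (i+1) (step γ 0 α σ) := by
  have hm := mOf_B hγ hα1 hα2 hB
  have hk := kstar_B hγ hα1 hα2 hB
  have hD := Delta_B hγ hα1 hα2 hB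
  have hdpos : 0 < 1 - (α-1)*(2+γ) := by linarith
  have hy : ∀ l : ℕ, (step γ 0 α σ).y l =
      if l ≤ i + 2 then
        max (σ.y l + (1 - (α-1)*(2+γ)) * lam γ 0 ((l:ℤ) - ((i:ℤ)+1)) / γ) 0 else 0 := by
    intro l
    simp only [step, hm, hk, hD]
    push_cast
    ring_nf
  obtain ⟨hs, hyi, hyi1, hyi2, hlo, hhi⟩ := hB
  refine ⟨?_, ?_, ?_, ?_, ?_⟩
  · show σ.s + DeltaOf γ 0 α σ = _
    rw [hs, hD]; push_cast; ring
  · rw [hy (i+1), if_pos (by omega),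
      (by push_cast; ring : ((i+1 : ℕ) : ℤ) - ((i:ℤ)+1) = 0), lam_zero_zero, hyi1,
      mul_zero, zero_div, add_zero]
    exact max_eq_left (by linarith)
  · rw [hy (i+2), if_pos (by omega),
      (by push_cast; ring : ((i+2 : ℕ) : ℤ) - ((i:ℤ)+1) = 1), lam_zero_one, hyi2,
      mul_div_assoc, div_self hγ.ne', mul_one]
    rw [show (α-1)*(2+γ) + (1 - (α-1)*(2+γ)) = 1 by ring]
    exact max_eq_left (by linarith)
  · intro l hl
    have hyl : σ.y l ≤ α ∧ 0 ≤ σ.y l := by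
      rcases (by omega : l < i ∨ l = i) with h | h
      · exact ⟨(hlo l h).2.le, (hlo l h).1⟩
      · rw [h, hyi]; exact ⟨le_refl _, by linarith⟩
    have hlam : lam γ 0 ((l:ℤ) - ((i:ℤ)+1)) < 0 := by
      apply lam_neg hγ
      have : (l:ℤ) ≤ (i:ℤ) := by exact_mod_cast (by omega : l ≤ i)
      omega
    have hterm : (1 - (α-1)*(2+γ)) * lam γ 0 ((l:ℤ) - ((i:ℤ)+1)) / γ < 0 :=
      div_neg_of_neg_of_pos (mul_neg_of_pos_of_neg hdpos hlam) hγ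
    rw [hy l, if_pos (by omega)]
    exact ⟨le_max_right _ _, max_lt (by linarith [hyl.1, hyl.2]) (by linarith)⟩
  · intro l hl
    rw [hy l, if_neg (by omega)]

end B
section Main3
variable {γ α : ℝ} (hγ : 0 < γ) (hα1 : 1 < α) (hα2 : (α-1)*(2+γ) < 1)
include hγ hα1 hα2

lemma y0_zero : (state γ ρ α 0).y 0 = α ∨ True := Or.inr trivial

lemma mOf_0 : mOf γ 0 α (state γ 0 α 0) = 0 := by
  have hα3 : α < 2 := alpha_lt_two hγ hα1 hα2
  apply IsGreatest.csSup_eq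
  constructor
  · show (state γ 0 α 0).y 0 = alphaOf γ 0 α _
    rw [alphaOf_zero, state_zero]
    show max (α - ((0:ℕ):ℝ)) 0 = α
    rw [Nat.cast_zero, sub_zero]
    exact max_eq_left (by linarith)
  · intro l hl
    simp only [Set.mem_setOf_eq, alphaOf_zero, state_zero] at hl
    change max (α - (l:ℝ)) 0 = α at hl
    by_contra hli
    push_neg at hli
    have hl1 : (1:ℝ) ≤ (l:ℝ) := by exact_mod_cast hli
    have : max (α - (l:ℝ)) 0 < α := max_lt (by linarith) (by linarith)
    rw [hl] at this; exact lt_irrefl _ this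

lemma kOf_0 : kOf (state γ 0 α 0) = 1 := by
  have hα3 : α < 2 := alpha_lt_two hγ hα1 hα2
  apply IsGreatest.csSup_eq
  constructor
  · show 0 < (state γ 0 α 0).y 1
    rw [state_zero]
    change (0:ℝ) < max (α - ((1:ℕ):ℝ)) 0
    rw [Nat.cast_one]
    exact lt_max_iff.2 (Or.inl (by linarith))
  · intro l hl
    simp only [Set.mem_setOf_eq, state_zero] at hl
    change (0:ℝ) < max (α - (l:ℝ)) 0 at hl
    by_contra hli
    push_neg at hli
    have hl2 : (2:ℝ) ≤ (l:ℝ) := by exact_mod_cast hli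
    rw [max_eq_right (by linarith)] at hl
    exact lt_irrefl _ hl

lemma kstar_0 : kstarOf (state γ 0 α 0) = 1 := by
  have hα3 : α < 2 := alpha_lt_two hγ hα1 hα2
  rw [kstarOf, kOf_0 hγ hα1 hα2]
  rw [if_pos]
  rw [state_zero]
  change max (α - ((1:ℕ):ℝ)) 0 < 1
  rw [Nat.cast_one]
  exact max_lt (by linarith) one_pos

lemma Delta_0 : DeltaOf γ 0 α (state γ 0 α 0) = 2 - α := by
  have hα3 : α < 2 := alpha_lt_two hγ hα1 hα2
  have hm := mOf_0 hγ hα1 hα2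
  have hk := kstar_0 hγ hα1 hα2
  have hIoc : Set.Ioc (mOf γ 0 α (state γ 0 α 0)) (kstarOf (state γ 0 α 0)) = {1} := by
    rw [hm, hk]; ext l; simp only [Set.mem_Ioc, Set.mem_singleton_iff]; omega
  rw [DeltaOf, hIoc, Set.image_singleton, csInf_singleton]
  rw [deltaOf, if_pos hk.symm, hk, hm]
  rw [(by norm_num : ((1:ℕ):ℤ) - ((0:ℕ):ℤ) = 1), lam_zero_one]
  rw [show (state γ 0 α 0).y 1 = α - 1 by
    rw [state_zero]; change max (α - ((1:ℕ):ℝ)) 0 = α - 1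
    rw [Nat.cast_one]; exact max_eq_left (by linarith)]
  rw [show (1:ℝ) - (α - 1) = 2 - α by ring, mul_div_assoc, div_self hγ.ne', mul_one]

lemma isA_one : isA γ α 0 (state γ 0 α 1) := by
  have hα3 : α < 2 := alpha_lt_two hγ hα1 hα2
  have hm := mOf_0 hγ hα1 hα2
  have hk := kstar_0 hγ hα1 hα2
  have hD := Delta_0 hγ hα1 hα2
  rw [state_succ]
  have hy : ∀ l : ℕ, (step γ 0 α (state γ 0 α 0)).y l =
      if l ≤ 1 then max ((state γ 0 α 0).y l + (2-α) * lam γ 0 ((l:ℤ) - ((0:ℕ):ℤ)) / γ) 0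
      else 0 := by
    intro l
    simp only [step, hm, hk, hD]
  refine ⟨?_, ?_, ?_, ?_, ?_⟩
  · show (state γ 0 α 0).s + DeltaOf γ 0 α (state γ 0 α 0) = _
    rw [hD, state_zero]
    show 0 + (2 - α) = _
    push_cast; ring
  · rw [hy 0, if_pos (by omega), (by norm_num : ((0:ℕ):ℤ) - ((0:ℕ):ℤ) = 0),
      lam_zero_zero, mul_zero, zero_div, add_zero]
    rw [state_zero]
    change max (max (α - ((0:ℕ):ℝ)) 0) 0 = α
    rw [Nat.cast_zero, sub_zero, max_eq_left (by linarith : (0:ℝ) ≤ α),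
      max_eq_left (by linarith : (0:ℝ) ≤ α)]
  · rw [hy 1, if_pos (by omega), (by norm_num : ((1:ℕ):ℤ) - ((0:ℕ):ℤ) = 1),
      lam_zero_one, mul_div_assoc, div_self hγ.ne', mul_one]
    rw [show (state γ 0 α 0).y 1 = α - 1 by
      rw [state_zero]; change max (α - ((1:ℕ):ℝ)) 0 = α - 1
      rw [Nat.cast_one]; exact max_eq_left (by linarith)]
    rw [show α - 1 + (2 - α) = 1 by ring]
    exact max_eq_left (by linarith)
  · intro l hl; omega
  · intro l hl
    rw [hy l, if_neg (by omega)]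

lemma stateAB : ∀ i : ℕ, isA γ α i (state γ 0 α (2*i+1)) ∧ isB γ α i (state γ 0 α (2*i+2)) := by
  intro i
  induction i with
  | zero =>
    have hA := isA_one hγ hα1 hα2
    refine ⟨hA, ?_⟩
    rw [show 2*0+2 = (2*0+1)+1 by rfl, state_succ]
    exact step_A hγ hα1 hα2 hA
  | succ i ih =>
    have hA : isA γ α (i+1) (state γ 0 α (2*(i+1)+1)) := by
      rw [show 2*(i+1)+1 = (2*i+2)+1 by ring, state_succ]
      exact step_B hγ hα1 hα2 ih.2
    refine ⟨hA, ?_⟩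
    rw [show 2*(i+1)+2 = (2*(i+1)+1)+1 by rfl, state_succ]
    exact step_A hγ hα1 hα2 hA

lemma s_mono : Monotone (fun n => (state γ 0 α n).s) := by
  have hα3 : α < 2 := alpha_lt_two hγ hα1 hα2
  apply monotone_nat_of_le_succ
  intro n
  rcases Nat.even_or_odd n with ⟨l, hl⟩ | ⟨l, hl⟩
  · rcases l with _ | m
    · have h : n = 0 := by omega
      subst h
      rw [(stateAB hγ hα1 hα2 0).1.1]
      rw [state_zero]
      show (0:ℝ) ≤ _
      push_cast; nlinarith
    · have h : n = 2*m+2 := by omega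
      subst h
      rw [(stateAB hγ hα1 hα2 m).2.1,
        show 2*m+2+1 = 2*(m+1)+1 by ring, (stateAB hγ hα1 hα2 (m+1)).1.1]
      push_cast; nlinarith
  · obtain ⟨m, h⟩ : ∃ m, n = 2*m+1 := ⟨l, by omega⟩
    subst h
    rw [(stateAB hγ hα1 hα2 m).1.1, (stateAB hγ hα1 hα2 m).2.1]
    nlinarith

end Main3
lemma yAt_def (γ ρ α : ℝ) (j : ℕ) (t : ℝ) : yAt γ ρ α j t =
    if j ≤ kstarOf (state γ ρ α (idxAt γ ρ α t)) then
      max ((state γ ρ α (idxAt γ ρ α t)).y j +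
        (t - (state γ ρ α (idxAt γ ρ α t)).s) *
          lam γ ρ ((j : ℤ) - (mOf γ ρ α (state γ ρ α (idxAt γ ρ α t)) : ℤ)) / γ) 0
    else 0 := rfl

section Main4
variable {γ α : ℝ} (hγ : 0 < γ) (hα1 : 1 < α) (hα2 : (α-1)*(2+γ) < 1)
include hγ hα1 hα2

lemma idxAt_eq {n : ℕ} {t : ℝ} (h2 : t < (state γ 0 α (n+1)).s)
    (h3 : ∀ m, m < n → (state γ 0 α (m+1)).s ≤ t) : idxAt γ 0 α t = n := by
  apply le_antisymm
  · exact Nat.sInf_le h2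
  · apply le_csInf ⟨n, h2⟩
    intro m hm
    by_contra hmn
    push_neg at hmn
    exact absurd hm (not_lt.2 (h3 m hmn))

lemma yAt_hit (i : ℕ) : yAt γ 0 α (i+1) ((2-α) + i*(2+γ-(1+γ)*α)) = 1 := by
  have hA := (stateAB hγ hα1 hα2 i).1
  have hB := (stateAB hγ hα1 hα2 i).2
  set T : ℝ := (2-α) + i*(2+γ-(1+γ)*α) with hT
  have hidx : idxAt γ 0 α T = 2*i+1 := by
    apply idxAt_eq hγ hα1 hα2
    · rw [hB.1]; linarith
    · intro m hm
      calc (state γ 0 α (m+1)).s ≤ (state γ 0 α (2*i+1)).s :=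
            s_mono hγ hα1 hα2 (by omega)
        _ = T := hA.1
  rw [yAt_def, hidx, if_pos (by rw [kstar_A hγ hα1 hα2 hA]; omega), hA.2.2.1, hA.1]
  rw [sub_self, zero_mul, zero_div, add_zero]
  exact max_eq_left one_pos.le

lemma yAt_lt (i : ℕ) (t : ℝ) (ht0 : 0 ≤ t) (htT : t < (2-α) + i*(2+γ-(1+γ)*α)) :
    yAt γ 0 α (i+1) t < 1 := by
  have hα3 : α < 2 := alpha_lt_two hγ hα1 hα2
  have hAi := (stateAB hγ hα1 hα2 i).1
  have hmem : (2*i : ℕ) ∈ {m : ℕ | t < (state γ 0 α (m+1)).s} := by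
    show t < (state γ 0 α (2*i+1)).s
    rw [hAi.1]; exact htT
  set n := idxAt γ 0 α t with hn
  have hnle : n ≤ 2*i := Nat.sInf_le hmem
  have hnmem : t < (state γ 0 α (n+1)).s := Nat.sInf_mem ⟨2*i, hmem⟩
  rw [yAt_def]
  have hcase : n = 0 ∨ (∃ l, l < i ∧ n = 2*l+1) ∨ (∃ l, l < i ∧ n = 2*l+2) := by
    rcases Nat.even_or_odd n with ⟨p, hp⟩ | ⟨p, hp⟩
    · rcases p with _ | q
      · exact Or.inl (by omega)
      · exact Or.inr (Or.inr ⟨q, by omega, by omega⟩)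
    · exact Or.inr (Or.inl ⟨p, by omega, by omega⟩)
  rcases hcase with h | ⟨l, hl, h⟩ | ⟨l, hl, h⟩
  · rw [← hn, h]
    rw [kstar_0 hγ hα1 hα2]
    rcases (by omega : 1 < i + 1 ∨ i = 0) with hi | hi
    · rw [if_neg (by omega)]; exact one_pos
    · subst hi
      rw [if_pos le_rfl, mOf_0 hγ hα1 hα2]
      have hy1 : (state γ 0 α 0).y 1 = α - 1 := by
        rw [state_zero]; change max (α - ((1:ℕ):ℝ)) 0 = α - 1
        rw [Nat.cast_one]; exact max_eq_left (by linarith)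
      have hs0 : (state γ 0 α 0).s = 0 := by rw [state_zero]
      rw [hy1, hs0, (by norm_num : ((0+1:ℕ):ℤ) - ((0:ℕ):ℤ) = 1), lam_zero_one,
        sub_zero, mul_div_assoc, div_self hγ.ne', mul_one]
      have ht1 : t < 2 - α := by
        have h1 : (state γ 0 α (0+1)).s = 2 - α := by
          have := hAi.1
          simpa using this
        rw [h, h1] at hnmem; exact hnmem
      exact max_lt (by linarith) one_pos
  · have hA := (stateAB hγ hα1 hα2 l).1
    rw [← hn, h, kstar_A hγ hα1 hα2 hA]
    rcases (by omega : l + 2 < i + 1 ∨ i = l + 1) with hi | hi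
    · rw [if_neg (by omega)]; exact one_pos
    · subst hi
      rw [if_pos le_rfl, mOf_A hγ hα1 hα2 hA, hA.2.2.2.2 (l+1+1) (by omega), hA.1]
      rw [(by push_cast; ring : ((l+1+1:ℕ):ℤ) - ((l:ℕ):ℤ) = 2), lam_zero_two]
      have ht2 : t - ((2-α) + l*(2+γ-(1+γ)*α)) < α - 1 := by
        have h1 := (stateAB hγ hα1 hα2 l).2.1
        rw [h, h1] at hnmem; linarith
      rw [show (t - ((2-α) + l*(2+γ-(1+γ)*α))) * (γ*(2+γ)) / γ
          = (t - ((2-α) + l*(2+γ-(1+γ)*α))) * (2+γ) by field_simp]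
      apply max_lt _ one_pos
      have h2γ : (0:ℝ) < 2+γ := by linarith
      nlinarith
  · have hB := (stateAB hγ hα1 hα2 l).2
    rw [← hn, h, kstar_B hγ hα1 hα2 hB]
    rcases (by omega : l + 2 < i + 1 ∨ i = l + 1) with hi | hi
    · rw [if_neg (by omega)]; exact one_pos
    · subst hi
      rw [if_pos le_rfl, mOf_B hγ hα1 hα2 hB, hB.2.2.2.1, hB.1]
      rw [(by push_cast; ring : ((l+1+1:ℕ):ℤ) - ((l+1:ℕ):ℤ) = 1), lam_zero_one,
        mul_div_assoc, div_self hγ.ne', mul_one]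
      have ht2 : t < (2-α) + (l+1:ℕ)*(2+γ-(1+γ)*α) := by
        have h1 := (stateAB hγ hα1 hα2 (l+1)).1.1
        rw [h, show 2*l+2+1 = 2*(l+1)+1 by ring, h1] at hnmem
        exact hnmem
      push_cast at ht2
      apply max_lt _ one_pos
      nlinarith
  
lemma tHit_eq (i : ℕ) : tHit γ 0 α (i+1) = (2-α) + i*(2+γ-(1+γ)*α) := by
  have hα3 : α < 2 := alpha_lt_two hγ hα1 hα2
  have hc : (0:ℝ) < 2+γ-(1+γ)*α := by nlinarith
  have hi0 : (0:ℝ) ≤ (i:ℝ) := Nat.cast_nonneg i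
  apply IsLeast.csInf_eq
  constructor
  · refine ⟨by nlinarith, ⟨2*i+2, ?_⟩, yAt_hit hγ hα1 hα2 i⟩
    rw [(stateAB hγ hα1 hα2 i).2.1]
    linarith
  · rintro t ⟨ht0, -, hy1⟩
    by_contra hlt
    push_neg at hlt
    have := yAt_lt hγ hα1 hα2 i t ht0 hlt
    rw [hy1] at this
    exact lt_irrefl _ this

end Main4
/-- Regime 1 increments.  Suppose `ρ = 0` and `1 < α < 1 + γ/γ_2`.  Then
the hitting times `t_j = inf{t ∈ [0,t*) : y_j(t) = 1}` satisfy `t_1 = 2 − α` and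
`t_{j+1} − t_j = (2+γ) − (1+γ)α` for every `j ≥ 1`. -/
theorem regime_one_increments (γ α : ℝ) (hγ : 0 < γ) (hα1 : 1 < α)
    (hα2 : α < 1 + γ / gam γ 2) :
    tHit γ 0 α 1 = 2 - α ∧
    ∀ j : ℕ, 1 ≤ j → tHit γ 0 α (j + 1) - tHit γ 0 α j = (2 + γ) - (1 + γ) * α := by
  have h2γ : (0:ℝ) < 2 + γ := by linarith
  have hg2 : gam γ 2 = γ * (2 + γ) := by
    show (1+γ)^(2:ℤ) - 1 = γ * (2+γ)
    rw [zpow_two]; ring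
  have hdiv : γ / (γ * (2 + γ)) = 1 / (2 + γ) := by
    field_simp
  have hα2' : (α - 1) * (2 + γ) < 1 := by
    rw [hg2, hdiv] at hα2
    have h1 : α - 1 < 1 / (2 + γ) := by linarith
    calc (α - 1) * (2 + γ) < (1 / (2 + γ)) * (2 + γ) := by
          exact mul_lt_mul_of_pos_right h1 h2γ
      _ = 1 := by field_simp
  constructor
  · have := tHit_eq hγ hα1 hα2' 0
    simpa using this
  · intro j hj
    obtain ⟨i, rfl⟩ : ∃ i, j = i + 1 := ⟨j - 1, by omega⟩
    rw [tHit_eq hγ hα1 hα2' (i+1), tHit_eq hγ hα1 hα2' i]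
    push_cast
    ring
end

end SelectiveSweeps
end
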